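/- For the Chaplygin case b = 0, c = 1: with H₀ = (1/2)(M₁²+M₂²)+M₃²+(1/2)(α₁²−α₂²) and K₀ = (M₁²+M₂²)² + 2α₃²(M₁²−M₂²) + α₃⁴, the e*(3) Lie–Poisson bracket gives {H₀,K₀} = 8α₃M₁M₂(α₁M₁+α₂M₂+α₃M₃); in particular {H₀,K₀} vanishes identically on the level set α₁M₁+α₂M₂+α₃M₃ = 0. -/

import Mathlib

/-- Phase space ℝ⁶ with coordinates (M₁,M₂,M₃,α₁,α₂,α₃) = (x 0,…,x 5). -/
abbrev V6 := Fin 6 → ℝ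

/-- Partial derivative of `f` in the `i`-th coordinate direction at `x`. -/
noncomputable def pd (f : V6 → ℝ) (i : Fin 6) (x : V6) : ℝ :=
  fderiv ℝ f x (Pi.single i 1)

/-- Index of M_i among the 6 coordinates. -/
def Mi (i : Fin 3) : Fin 6 := ⟨i.1, by omega⟩
/-- Index of α_i among the 6 coordinates. -/
def Ai (i : Fin 3) : Fin 6 := ⟨i.1 + 3, by omega⟩

/-- Levi-Civita symbol on {0,1,2}. -/
noncomputable def eps (i j k : Fin 3) : ℝ :=
  ((((i.1 : ℤ) - j.1) * ((j.1 : ℤ) - k.1) * ((k.1 : ℤ) - i.1) : ℤ) : ℝ) / 2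

/-- The e*(3) Lie–Poisson bracket:
{f,g} = Σ ε_{ijk} ( M_k ∂f/∂M_i ∂g/∂M_j + α_k (∂f/∂M_i ∂g/∂α_j + ∂f/∂α_i ∂g/∂M_j) ). -/
noncomputable def pb (f g : V6 → ℝ) (x : V6) : ℝ :=
  ∑ i : Fin 3, ∑ j : Fin 3, ∑ k : Fin 3, eps i j k *
    ( x (Mi k) * pd f (Mi i) x * pd g (Mi j) x
      + x (Ai k) * (pd f (Mi i) x * pd g (Ai j) x + pd f (Ai i) x * pd g (Mi j) x) )

/-- Chaplygin Hamiltonian (b = 0, c = 1). -/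
noncomputable def H0 : V6 → ℝ := fun x =>
  (1/2) * ((x 0)^2 + (x 1)^2) + (x 2)^2 + (1/2) * ((x 3)^2 - (x 4)^2)

/-- Chaplygin integral K₀. -/
noncomputable def K0 : V6 → ℝ := fun x =>
  ((x 0)^2 + (x 1)^2)^2 + 2*(x 5)^2*((x 0)^2 - (x 1)^2) + (x 5)^4

theorem fderiv_coord {ι : Type*} [Fintype ι] (i : ι) (x : ι → ℝ) :
    fderiv ℝ (fun y : ι → ℝ => y i) x = ContinuousLinearMap.proj i :=
  (hasFDerivAt_apply i x).fderiv

theorem pd_H0 (x : V6) (i : Fin 6) :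
    pd H0 i x = ![x 0, x 1, 2 * x 2, x 3, -x 4, 0] i := by
  unfold pd H0
  simp (disch := fun_prop) only [fderiv_fun_add, fderiv_fun_sub, fderiv_const_mul, fderiv_fun_pow,
    fderiv_coord]
  fin_cases i <;> simp

theorem pd_K0 (x : V6) (i : Fin 6) :
    pd K0 i x = ![4 * x 0 * (x 0 ^ 2 + x 1 ^ 2) + 4 * x 5 ^ 2 * x 0,
      4 * x 1 * (x 0 ^ 2 + x 1 ^ 2) - 4 * x 5 ^ 2 * x 1, 0, 0, 0,
      4 * x 5 * (x 0 ^ 2 - x 1 ^ 2) + 4 * x 5 ^ 3] i := by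
  unfold pd K0
  simp (disch := fun_prop) only [fderiv_fun_add, fderiv_fun_sub, fderiv_const_mul, fderiv_fun_pow,
    fderiv_fun_mul, fderiv_coord]
  fin_cases i <;> simp <;> ring

theorem pb_eq_coords (f g : V6 → ℝ) (x : V6) :
    pb f g x =
      x 2 * (pd f 0 x * pd g 1 x - pd f 1 x * pd g 0 x)
      + x 0 * (pd f 1 x * pd g 2 x - pd f 2 x * pd g 1 x)
      + x 1 * (pd f 2 x * pd g 0 x - pd f 0 x * pd g 2 x)
      + x 5 * (pd f 0 x * pd g 4 x - pd f 1 x * pd g 3 x + pd f 3 x * pd g 1 x - pd f 4 x * pd g 0 x)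
      + x 3 * (pd f 1 x * pd g 5 x - pd f 2 x * pd g 4 x + pd f 4 x * pd g 2 x - pd f 5 x * pd g 1 x)
      + x 4 * (pd f 2 x * pd g 3 x - pd f 0 x * pd g 5 x + pd f 5 x * pd g 0 x - pd f 3 x * pd g 2 x) := by
  have hMi : Mi 0 = 0 ∧ Mi 1 = 1 ∧ Mi 2 = 2 := ⟨rfl, rfl, rfl⟩
  have hAi : Ai 0 = 3 ∧ Ai 1 = 4 ∧ Ai 2 = 5 := ⟨rfl, rfl, rfl⟩
  simp only [pb, Fin.sum_univ_three, eps, hMi, hAi]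
  norm_num
  ring

theorem bracket_H0_K0 (x : V6) :
    pb H0 K0 x = 8 * x 5 * x 0 * x 1 * (x 3 * x 0 + x 4 * x 1 + x 5 * x 2) ∧
    (x 3 * x 0 + x 4 * x 1 + x 5 * x 2 = 0 → pb H0 K0 x = 0) := by
  have bracket : pb H0 K0 x = 8 * x 5 * x 0 * x 1 * (x 3 * x 0 + x 4 * x 1 + x 5 * x 2) := by
    simp only [pb_eq_coords, pd_H0, pd_K0, Matrix.cons_val]
    ring
  exact ⟨bracket, fun h => by rw [bracket, h, mul_zero]⟩
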